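/- Let k, m, n, s be integers with k ≥ 3, m ≥ 3, n ≥ (k-1)m + 1, and 2 ≤ s ≤ m - 1, and let q₁ be a real number with m + (k-1)s < q₁ < m + n. Define φ*(x) = x⁴ - (2m + n + k - 2)x³ + (m² + mn + 2km + kn - 3m - n - 2k + 2)x² + (km - m + kn - n - km² + m² - kmn + mn)x and φ₁(x) = x⁴ - (2m + n + ks - 2s)x³ + (m² + mn + 2kms + kns - 3ms - ns - 2ks² + 2s²)x² + (kms² - ms² + kns² - ns² - km²s + m²s - kmns + mns)x. If φ₁(q₁) = 0, then φ*(q₁) < 0. -/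

import Mathlib

/-- φ₁, the characteristic polynomial of the quotient matrix B₁. -/
def phi1 (k m n s x : ℝ) : ℝ :=
  x^4 - (2*m + n + k*s - 2*s)*x^3
    + (m^2 + m*n + 2*k*m*s + k*n*s - 3*m*s - n*s - 2*k*s^2 + 2*s^2)*x^2
    + (k*m*s^2 - m*s^2 + k*n*s^2 - n*s^2 - k*m^2*s + m^2*s - k*m*n*s + m*n*s)*x

/-- φ*, the characteristic polynomial of the quotient matrix B*. -/
def phiStar (k m n x : ℝ) : ℝ :=
  x^4 - (2*m + n + k - 2)*x^3
    + (m^2 + m*n + 2*k*m + k*n - 3*m - n - 2*k + 2)*x^2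
    + (k*m - m + k*n - n - k*m^2 + m^2 - k*m*n + m*n)*x

/-!
On a root `q` of `φ₁` one has `φ*(q) = q (s - 1) ψ(q)` for an explicit quadratic `ψ` with leading
coefficient `k - 2 ≥ 0`. Such a quadratic is convex, so it is negative on `[m + (k-1)s, m + n]`
as soon as it is negative at both endpoints, and both endpoint values factor into visibly
negative expressions.
-/

open Set

theorem quadratic_neg_of_mem_Icc {a b c l u x : ℝ} (ha : 0 ≤ a)
    (hl : a * l ^ 2 + b * l + c < 0) (hu : a * u ^ 2 + b * u + c < 0) (hx : x ∈ Icc l u) :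
    a * x ^ 2 + b * x + c < 0 := by
  obtain ⟨hlx, hxu⟩ := hx
  rcases hlx.eq_or_lt with rfl | hlx
  · exact hl
  have hinterp : (u - l) * (a * x ^ 2 + b * x + c)
      = (u - x) * (a * l ^ 2 + b * l + c) + (x - l) * (a * u ^ 2 + b * u + c)
        - a * (x - l) * (u - x) * (u - l) := by ring
  have hcurv : 0 ≤ a * (x - l) * (u - x) * (u - l) := by
    have := sub_nonneg.2 hxu
    have := sub_nonneg.2 hlx.le
    have := sub_nonneg.2 (hlx.trans_le hxu).le
    positivity
  have hchord : (u - x) * (a * l ^ 2 + b * l + c) + (x - l) * (a * u ^ 2 + b * u + c) < 0 :=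
    add_neg_of_nonpos_of_neg (mul_nonpos_of_nonneg_of_nonpos (sub_nonneg.2 hxu) hl.le)
      (mul_neg_of_pos_of_neg (sub_pos.2 hlx) hu)
  exact neg_of_mul_neg_right (by linarith) (sub_nonneg.2 (hlx.trans_le hxu).le)

section

variable (k m n s : ℝ)

def psi (x : ℝ) : ℝ :=
  (k - 2) * x ^ 2 - (2*k*m + k*n - 3*m - n - 2*k*s - 2*k + 2*s + 2) * x
    - (k*m*s + k*m - m*s - m + k*n*s + k*n - n*s - n - k*m^2 + m^2 - k*m*n + m*n)

theorem phiStar_eq_phi1_add (x : ℝ) :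
    phiStar k m n x = phi1 k m n s x + x * (s - 1) * psi k m n s x := by
  unfold phiStar phi1 psi
  ring

theorem psi_left_eq :
    psi k m n s (m + (k - 1) * s)
      = -((k - 1) * (n * (k * s + 1) - s ^ 2 * k * (k - 1) - 2 * s * (k - 1) - m)) := by
  unfold psi
  ring

theorem psi_right_eq : psi k m n s (m + n) = -((m + n) * (n - (k - 1) * (s + 1))) := by
  unfold psi
  ring

variable {k m n s}

theorem psi_left_neg (hk : 2 ≤ k) (hs : 0 ≤ s) (hsm : s ≤ m) (hn : (k - 1) * m + 1 ≤ n) :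
    psi k m n s (m + (k - 1) * s) < 0 := by
  have hbound : ((k - 1) * m + 1) * (k * s + 1) ≤ n * (k * s + 1) :=
    mul_le_mul_of_nonneg_right hn (by positivity)
  -- `((k-1)m + 1)(ks + 1) - s²k(k-1) - 2s(k-1) - m = (k-1)ks(m-s) + (k-2)(m-s) + 1`
  have hgap : 0 ≤ (k - 1) * k * s * (m - s) + (k - 2) * (m - s) := by
    have hms := sub_nonneg.2 hsm
    have hk2 : 0 ≤ k - 2 := by linarith
    have hk1 : 0 ≤ k - 1 := by linarith
    have hk0 : 0 ≤ k := by linarith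
    exact add_nonneg (mul_nonneg (mul_nonneg (mul_nonneg hk1 hk0) hs) hms) (mul_nonneg hk2 hms)
  rw [psi_left_eq, neg_lt_zero]
  exact mul_pos (by linarith) (by nlinarith)

theorem psi_right_neg (hk : 1 ≤ k) (hs : 0 ≤ s) (hsm : s + 1 ≤ m) (hn : (k - 1) * m + 1 ≤ n) :
    psi k m n s (m + n) < 0 := by
  have hmul : (k - 1) * (s + 1) ≤ (k - 1) * m :=
    mul_le_mul_of_nonneg_left hsm (by linarith)
  have hkm : 0 ≤ (k - 1) * m := by nlinarith
  rw [psi_right_eq, neg_lt_zero]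
  exact mul_pos (by linarith) (by linarith)

theorem psi_neg_of_mem_Icc (hk : 2 ≤ k) (hs : 0 ≤ s) (hsm : s + 1 ≤ m)
    (hn : (k - 1) * m + 1 ≤ n) {x : ℝ} (hx : x ∈ Icc (m + (k - 1) * s) (m + n)) :
    psi k m n s x < 0 := by
  have hl := psi_left_neg hk hs (by linarith) hn
  have hu := psi_right_neg (by linarith) hs hsm hn
  unfold psi at hl hu ⊢
  have := quadratic_neg_of_mem_Icc (a := k - 2)
    (b := -(2*k*m + k*n - 3*m - n - 2*k*s - 2*k + 2*s + 2))
    (c := -(k*m*s + k*m - m*s - m + k*n*s + k*n - n*s - n - k*m^2 + m^2 - k*m*n + m*n))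
    (by linarith) (by linear_combination hl) (by linear_combination hu) hx
  linear_combination this

theorem phiStar_neg_of_phi1_eq_zero (hk : 2 ≤ k) (hs : 1 < s) (hsm : s + 1 ≤ m)
    (hn : (k - 1) * m + 1 ≤ n) {q : ℝ} (hq : q ∈ Icc (m + (k - 1) * s) (m + n))
    (hroot : phi1 k m n s q = 0) : phiStar k m n q < 0 := by
  have hq_pos : 0 < q := by nlinarith [hq.1]
  rw [phiStar_eq_phi1_add k m n s, hroot, zero_add]
  exact mul_neg_of_pos_of_neg (mul_pos hq_pos (by linarith))
    (psi_neg_of_mem_Icc hk (by linarith) hsm hn hq)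

end

theorem stmt_19_general (k m n s : ℤ) (hk : 3 ≤ k)
    (hn : (k-1)*m + 1 ≤ n) (hs1 : 2 ≤ s) (hs2 : s ≤ m - 1)
    (q1 : ℝ) (hq1l : (m : ℝ) + (k-1)*s < q1) (hq1u : q1 < (m : ℝ) + n)
    (hroot : phi1 k m n s q1 = 0) :
    phiStar k m n q1 < 0 := by
  have hk' : (2 : ℝ) ≤ k := by exact_mod_cast (by omega : 2 ≤ k)
  have hs' : (1 : ℝ) < s := by exact_mod_cast hs1
  have hsm : (s : ℝ) + 1 ≤ m := by exact_mod_cast (by omega : s + 1 ≤ m)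
  have hn' : ((k : ℝ) - 1) * m + 1 ≤ n := by exact_mod_cast hn
  exact phiStar_neg_of_phi1_eq_zero hk' hs' hsm hn' ⟨hq1l.le, hq1u.le⟩ hroot

theorem stmt_19 (k m n s : ℤ) (hk : 3 ≤ k) (hm : 3 ≤ m)
    (hn : (k-1)*m + 1 ≤ n) (hs1 : 2 ≤ s) (hs2 : s ≤ m - 1)
    (q1 : ℝ) (hq1l : (m : ℝ) + (k-1)*s < q1) (hq1u : q1 < (m : ℝ) + n)
    (hroot : phi1 k m n s q1 = 0) :
    phiStar k m n q1 < 0 :=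
  stmt_19_general k m n s hk hn hs1 hs2 q1 hq1l hq1u hroot
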